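/- arXiv:1901.05843 — 6 statements merged into one kernel-verified Lean document; each statement's English description precedes it below -/
import Mathlib

section
/- Let (a_n) be a sequence of positive real numbers and K ≥ 1 an integer. Suppose there is a sequence (s_n) of real numbers such that for all sufficiently large n, a_n/a_{n+1} = 1 + 1/n + (1/n)·∑_{i=1}^{K-1} 1/(∏_{k=1}^{i} ln_{(k)} n) + s_n/(n·∏_{k=1}^{K} ln_{(k)} n). If liminf_{n→∞} s_n > 1, then the series ∑_{n=1}^∞ a_n converges. -/
/-!
Kummer's test with `b n = g n`, where `g x = x * ∏_{k=1}^K ln_{(k)} x`. The ratio hypothesis says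
exactly `g n * a n / a (n+1) = g n + g' n - 1 + s n`, and two applications of the mean value
theorem give `g (n+1) - g n - g' n ≤ sup_{[n, n+1]} g'' = O((ln n)^K / n)`. Hence
`g n * a n / a (n+1) - g (n+1) ≥ s n - 1 - o(1)`, which is eventually bounded below by a positive
constant because `liminf s > 1`.
-/

open Filter Real Finset Topology

lemma summable_of_mul_le_sub_succ {a c : ℕ → ℝ} {δ : ℝ} (hδ : 0 < δ) (ha : ∀ n, 0 ≤ a n)
    (hc : ∀ n, 0 ≤ c n) (h : ∀ n, δ * a (n + 1) ≤ c n - c (n + 1)) : Summable a := by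
  refine (summable_nat_add_iff 1).1 (summable_of_sum_range_le (c := c 0 / δ)
    (fun n => ha (n + 1)) fun m => ?_)
  rw [le_div_iff₀ hδ, sum_mul]
  calc ∑ i ∈ range m, a (i + 1) * δ ≤ ∑ i ∈ range m, (c i - c (i + 1)) :=
        sum_le_sum fun i _ => (mul_comm _ _).trans_le (h i)
    _ = c 0 - c m := sum_range_sub' c m
    _ ≤ c 0 := sub_le_self _ (hc m)

theorem summable_of_kummer {a b : ℕ → ℝ} {δ : ℝ} (hδ : 0 < δ) (ha : ∀ n, 0 < a n)
    (hb : ∀ᶠ n in atTop, 0 ≤ b n)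
    (h : ∀ᶠ n in atTop, δ ≤ b n * (a n / a (n + 1)) - b (n + 1)) : Summable a := by
  obtain ⟨N, hN⟩ := eventually_atTop.1 (hb.and h)
  refine (summable_nat_add_iff N).1 (summable_of_mul_le_sub_succ
    (c := fun n => b (n + N) * a (n + N)) hδ (fun n => (ha _).le)
    (fun n => mul_nonneg (hN _ (N.le_add_left n)).1 (ha _).le) fun n => ?_)
  have hn := mul_le_mul_of_nonneg_right (hN (n + N) (N.le_add_left n)).2 (ha (n + N + 1)).le
  rw [sub_mul, mul_assoc, div_mul_cancel₀ _ (ha _).ne'] at hn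
  simpa only [Nat.add_right_comm n 1 N] using hn

lemma isBoundedUnder_ge_of_liminf_ne_zero {ι : Type*} {f : Filter ι} {s : ι → ℝ}
    (hs : liminf s f ≠ 0) : IsBoundedUnder (· ≥ ·) f s :=
  not_not.1 fun h => hs (Real.liminf_of_not_isBoundedUnder h)

namespace Bertrand

def OneLeIterLog (K : ℕ) (x : ℝ) : Prop := ∀ j ≤ K, 1 ≤ log^[j] x

noncomputable def logProd (K : ℕ) (x : ℝ) : ℝ := ∏ k ∈ Icc 1 K, log^[k] x

noncomputable def weight (K : ℕ) (x : ℝ) : ℝ := x * logProd K x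

noncomputable def weightDeriv : ℕ → ℝ → ℝ
  | 0, _ => 1
  | K + 1, x => weightDeriv K x * log^[K + 1] x + 1

noncomputable def weightDeriv2 : ℕ → ℝ → ℝ
  | 0, _ => 0
  | K + 1, x => weightDeriv2 K x * log^[K + 1] x + weightDeriv K x / weight K x

variable {K : ℕ} {x : ℝ}

namespace OneLeIterLog

lemma mono {k : ℕ} (hx : OneLeIterLog K x) (hkK : k ≤ K) : OneLeIterLog k x :=
  fun j hj => hx j (hj.trans hkK)

lemma one_le (hx : OneLeIterLog K x) : 1 ≤ x := hx 0 K.zero_le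

lemma pos (hx : OneLeIterLog K x) : 0 < x := one_pos.trans_le hx.one_le

lemma one_le_log (hx : OneLeIterLog K x) (hK : 1 ≤ K) : 1 ≤ log x := hx 1 hK

lemma iterate_log_le_log (hx : OneLeIterLog K x) (hK : 1 ≤ K) : log^[K] x ≤ log x := by
  induction K, hK using Nat.le_induction with
  | base => exact le_rfl
  | succ K hK ih =>
    calc log^[K + 1] x = log (log^[K] x) := Function.iterate_succ_apply' _ _ _
      _ ≤ log^[K] x := (log_le_sub_one_of_pos (one_pos.trans_le (hx K K.le_succ))).trans
          (sub_le_self _ zero_le_one)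
      _ ≤ log x := ih (hx.mono K.le_succ)

lemma iterate_log_le_iterate_log {y : ℝ} (hx : OneLeIterLog K x) (hxy : x ≤ y) {j : ℕ}
    (hj : j ≤ K) : log^[j] x ≤ log^[j] y := by
  induction j with
  | zero => exact hxy
  | succ j ih =>
    simp only [Function.iterate_succ_apply']
    exact log_le_log (one_pos.trans_le (hx j (by omega))) (ih (by omega))

lemma of_le {y : ℝ} (hx : OneLeIterLog K x) (hxy : x ≤ y) : OneLeIterLog K y :=
  fun j hj => (hx j hj).trans (hx.iterate_log_le_iterate_log hxy hj)

end OneLeIterLog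

lemma tendsto_iterate_log_atTop (k : ℕ) : Tendsto (log^[k]) atTop atTop := by
  induction k with
  | zero => exact tendsto_id
  | succ k ih => rw [Function.iterate_succ']; exact tendsto_log_atTop.comp ih

lemma eventually_oneLeIterLog (K : ℕ) : ∀ᶠ x : ℝ in atTop, OneLeIterLog K x := by
  have h : ∀ᶠ x : ℝ in atTop, ∀ j ∈ range (K + 1), 1 ≤ log^[j] x :=
    (eventually_all_finset _).2 fun j _ => (tendsto_iterate_log_atTop j).eventually_ge_atTop 1
  exact h.mono fun x hx j hj => hx j (mem_range.2 (Nat.lt_succ_of_le hj))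

lemma logProd_zero (x : ℝ) : logProd 0 x = 1 := by simp [logProd]

lemma logProd_succ (K : ℕ) (x : ℝ) : logProd (K + 1) x = logProd K x * log^[K + 1] x :=
  prod_Icc_succ_top (Nat.le_add_left 1 K) _

lemma weight_zero : weight 0 = id := by ext x; simp [weight, logProd_zero]

lemma weight_succ (K : ℕ) (x : ℝ) : weight (K + 1) x = weight K x * log^[K + 1] x := by
  rw [weight, weight, logProd_succ, mul_assoc]

lemma one_le_logProd (hx : OneLeIterLog K x) : 1 ≤ logProd K x :=
  Finset.one_le_prod fun j hj => hx j (mem_Icc.1 hj).2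

lemma weight_pos (hx : OneLeIterLog K x) : 0 < weight K x :=
  mul_pos hx.pos (one_pos.trans_le (one_le_logProd hx))

lemma hasDerivAt_iterate_log (hx : OneLeIterLog K x) :
    HasDerivAt (log^[K + 1]) (weight K x)⁻¹ x := by
  induction K with
  | zero => simpa [weight_zero] using hasDerivAt_log hx.pos.ne'
  | succ K ih =>
    have hL : log^[K + 1] x ≠ 0 := (one_pos.trans_le (hx (K + 1) le_rfl)).ne'
    rw [Function.iterate_succ', weight_succ, mul_inv, ← div_eq_mul_inv]
    exact (ih (hx.mono K.le_succ)).log hL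

lemma hasDerivAt_weight (hx : OneLeIterLog K x) : HasDerivAt (weight K) (weightDeriv K x) x := by
  induction K with
  | zero => rw [weight_zero]; exact hasDerivAt_id x
  | succ K ih =>
    have hK := hx.mono K.le_succ
    have := (ih hK).mul (hasDerivAt_iterate_log hK)
    rw [mul_inv_cancel₀ (weight_pos hK).ne'] at this
    rwa [show weight (K + 1) = weight K * log^[K + 1] from funext (weight_succ K)]

lemma hasDerivAt_weightDeriv (hx : OneLeIterLog K x) :
    HasDerivAt (weightDeriv K) (weightDeriv2 K x) x := by
  induction K with
  | zero => exact hasDerivAt_const x 1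
  | succ K ih =>
    have hK := hx.mono K.le_succ
    have := ((ih hK).mul (hasDerivAt_iterate_log hK)).add_const 1
    rwa [← div_eq_mul_inv] at this

lemma one_le_weightDeriv (hx : OneLeIterLog K x) : 1 ≤ weightDeriv K x := by
  induction K with
  | zero => exact le_rfl
  | succ K ih =>
    have := mul_nonneg (zero_le_one.trans (ih (hx.mono K.le_succ)))
      (zero_le_one.trans (hx (K + 1) le_rfl))
    exact le_add_of_nonneg_left this

lemma weightDeriv_le (hx : OneLeIterLog K x) : weightDeriv K x ≤ (K + 1) * log x ^ K := by
  induction K with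
  | zero => simp [weightDeriv]
  | succ K ih =>
    have hK := hx.mono K.le_succ
    have hlog := hx.one_le_log K.succ_pos
    have hL := hx.iterate_log_le_log K.succ_pos
    have hprod : weightDeriv K x * log^[K + 1] x ≤ (K + 1) * log x ^ (K + 1) :=
      (mul_le_mul (ih hK) hL (zero_le_one.trans (hx (K + 1) le_rfl)) (by positivity)).trans_eq
        (by ring)
    have hpow : 1 ≤ log x ^ (K + 1) := one_le_pow₀ hlog
    calc weightDeriv (K + 1) x = weightDeriv K x * log^[K + 1] x + 1 := rfl
      _ ≤ (K + 1) * log x ^ (K + 1) + log x ^ (K + 1) := by linarith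
      _ = ((K + 1 : ℕ) + 1) * log x ^ (K + 1) := by push_cast; ring

lemma weightDeriv2_nonneg (hx : OneLeIterLog K x) : 0 ≤ weightDeriv2 K x := by
  induction K with
  | zero => exact le_rfl
  | succ K ih =>
    have hK := hx.mono K.le_succ
    exact add_nonneg (mul_nonneg (ih hK) (zero_le_one.trans (hx (K + 1) le_rfl)))
      (div_nonneg (zero_le_one.trans (one_le_weightDeriv hK)) (weight_pos hK).le)

lemma mul_weightDeriv2_le (hx : OneLeIterLog K x) : x * weightDeriv2 K x ≤ K ^ 2 * log x ^ K := by
  induction K with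
  | zero => simp [weightDeriv2]
  | succ K ih =>
    have hK := hx.mono K.le_succ
    have hlog := hx.one_le_log K.succ_pos
    have hw : x ≤ weight K x := le_mul_of_one_le_right hx.pos.le (one_le_logProd hK)
    have h₁ : x * weightDeriv2 K x * log^[K + 1] x ≤ K ^ 2 * log x ^ (K + 1) :=
      (mul_le_mul (ih hK) (hx.iterate_log_le_log K.succ_pos)
        (zero_le_one.trans (hx (K + 1) le_rfl)) (by positivity)).trans_eq (by ring)
    have h₂ : x * (weightDeriv K x / weight K x) ≤ (K + 1) * log x ^ K := by
      rw [mul_div_left_comm]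
      exact (mul_le_of_le_one_right (zero_le_one.trans (one_le_weightDeriv hK))
        ((div_le_one (weight_pos hK)).2 hw)).trans (weightDeriv_le hK)
    have hpow : (K + 1) * log x ^ K ≤ (K + 1) * log x ^ (K + 1) :=
      mul_le_mul_of_nonneg_left (pow_le_pow_right₀ hlog K.le_succ) (by positivity)
    calc x * weightDeriv2 (K + 1) x
        = x * weightDeriv2 K x * log^[K + 1] x + x * (weightDeriv K x / weight K x) := by
          rw [weightDeriv2]; ring
      _ ≤ K ^ 2 * log x ^ (K + 1) + (K + 1) * log x ^ (K + 1) := by linarith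
      _ ≤ ((K + 1 : ℕ) : ℝ) ^ 2 * log x ^ (K + 1) := by
          push_cast
          nlinarith [zero_le_one.trans (one_le_pow₀ (n := K + 1) hlog)]

lemma weightDeriv_succ_eq (hx : OneLeIterLog (K + 1) x) :
    weightDeriv (K + 1) x = logProd (K + 1) x * (1 + ∑ i ∈ Icc 1 K, 1 / logProd i x) + 1 := by
  induction K with
  | zero => simp [weightDeriv, logProd_succ, logProd_zero]
  | succ K ih =>
    have hP := (one_pos.trans_le (one_le_logProd (hx.mono K.succ.le_succ))).ne'
    rw [weightDeriv, ih (hx.mono K.succ.le_succ), sum_Icc_succ_top (Nat.le_add_left 1 K),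
      logProd_succ (K + 1)]
    field_simp
    ring

lemma weight_mul_ratio_eq (hK : 1 ≤ K) (hx : OneLeIterLog K x) {r t : ℝ}
    (hr : r = 1 + 1 / x + 1 / x * ∑ i ∈ Icc 1 (K - 1), 1 / logProd i x
      + t / (x * logProd K x)) :
    weight K x * r = weight K x + (weightDeriv K x - 1) + t := by
  obtain ⟨K, rfl⟩ := Nat.exists_eq_add_of_le' hK
  have hP := (one_pos.trans_le (one_le_logProd hx)).ne'
  rw [hr, weightDeriv_succ_eq hx, Nat.add_sub_cancel, weight]
  field_simp [hx.pos.ne']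
  ring

lemma weight_add_one_sub_sub_le (hx : OneLeIterLog K x) :
    weight K (x + 1) - weight K x - weightDeriv K x ≤ K ^ 2 * log (x + 1) ^ K / x := by
  obtain ⟨ξ, ⟨hxξ, hξ⟩, hweight⟩ := exists_hasDerivAt_eq_slope (weight K) (weightDeriv K)
    (lt_add_one x)
    (fun y hy' => (hasDerivAt_weight (hx.of_le hy'.1)).continuousAt.continuousWithinAt)
    (fun y hy' => hasDerivAt_weight (hx.of_le hy'.1.le))
  obtain ⟨η, ⟨hxη, hηξ⟩, hderiv⟩ := exists_hasDerivAt_eq_slope (weightDeriv K) (weightDeriv2 K)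
    hxξ (fun y hy' => (hasDerivAt_weightDeriv (hx.of_le hy'.1)).continuousAt.continuousWithinAt)
    (fun y hy' => hasDerivAt_weightDeriv (hx.of_le hy'.1.le))
  have hη := hx.of_le hxη.le
  rw [add_sub_cancel_left, div_one] at hweight
  rw [eq_div_iff (sub_pos.2 hxξ).ne'] at hderiv
  have hlog : log η ^ K ≤ log (x + 1) ^ K :=
    pow_le_pow_left₀ (log_nonneg hη.one_le) (log_le_log hη.pos (by linarith)) K
  rw [← hweight, ← hderiv, le_div_iff₀ hx.pos]
  calc weightDeriv2 K η * (ξ - x) * x ≤ η * weightDeriv2 K η := by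
        rw [mul_comm η]
        exact mul_le_mul (mul_le_of_le_one_right (weightDeriv2_nonneg hη) (by linarith))
          hxη.le hx.pos.le (weightDeriv2_nonneg hη)
    _ ≤ K ^ 2 * log η ^ K := mul_weightDeriv2_le hη
    _ ≤ K ^ 2 * log (x + 1) ^ K := by gcongr

lemma eventually_weight_add_one_sub_sub_le (K : ℕ) {δ : ℝ} (hδ : 0 < δ) :
    ∀ᶠ x : ℝ in atTop, weight K (x + 1) - weight K x - weightDeriv K x ≤ δ := by
  have hlim : Tendsto (fun x : ℝ => K ^ 2 * log (x + 1) ^ K / x) atTop (𝓝 0) := by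
    have := ((tendsto_pow_log_div_mul_add_atTop 1 (-1) K one_ne_zero).comp
      (tendsto_atTop_add_const_right atTop 1 tendsto_id)).const_mul ((K : ℝ) ^ 2)
    simpa [mul_div_assoc] using this
  filter_upwards [hlim.eventually (ge_mem_nhds hδ), eventually_oneLeIterLog K] with x hbound hx
  exact (weight_add_one_sub_sub_le hx).trans hbound

end Bertrand

open Bertrand

/-- **Extended Bertrand–De Morgan test, convergence part.**
Here `Real.log^[k] x` is the `k`-th iterate of the natural logarithm, i.e. `ln_{(k)} x`. -/
theorem extended_bertrand_deMorgan_convergence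
    (a : ℕ → ℝ) (ha : ∀ n, 0 < a n) (K : ℕ) (hK : 1 ≤ K) (s : ℕ → ℝ)
    (hratio : ∀ᶠ n : ℕ in Filter.atTop,
      a n / a (n + 1) =
        1 + 1 / (n : ℝ)
          + (1 / (n : ℝ)) * ∑ i ∈ Finset.Icc 1 (K - 1),
              1 / ∏ k ∈ Finset.Icc 1 i, Real.log^[k] (n : ℝ)
          + s n / ((n : ℝ) * ∏ k ∈ Finset.Icc 1 K, Real.log^[k] (n : ℝ)))
    (hs : 1 < Filter.liminf (fun n => s n) Filter.atTop) :
    Summable a := by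
  obtain ⟨c, hc, hcs⟩ := exists_between hs
  have hsc : ∀ᶠ n in atTop, c < s n :=
    eventually_lt_of_lt_liminf hcs (isBoundedUnder_ge_of_liminf_ne_zero (by linarith))
  have hδ : 0 < (c - 1) / 2 := by linarith
  have hnat := tendsto_natCast_atTop_atTop (R := ℝ)
  refine summable_of_kummer hδ ha
    ((hnat.eventually (eventually_oneLeIterLog K)).mono fun n hn => (weight_pos hn).le) ?_
  filter_upwards [hratio, hsc, hnat.eventually (eventually_oneLeIterLog K),
    hnat.eventually (eventually_weight_add_one_sub_sub_le K hδ)] with n hr hsn hn herr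
  rw [weight_mul_ratio_eq hK hn hr, Nat.cast_succ]
  linarith
end

section
/- (Kummer's test, convergence part.) Let (a_n) be a sequence of positive real numbers and let (ζ_n) be a sequence of positive real numbers defined for all n ≥ N for some N. Define ρ_n = ζ_n·(a_n/a_{n+1}) − ζ_{n+1}. If liminf_{n→∞} ρ_n > 0, then the series ∑_{n=1}^∞ a_n converges. -/
/-!
Multiplying `ρ n ≥ c > 0` by `a (n + 1)` gives `c * a (n + 1) ≤ ζ n * a n - ζ (n + 1) * a (n + 1)`
for large `n`, so the partial sums of `c * a (n + 1)` telescope and are bounded by the value of the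
eventually positive sequence `ζ n * a n` at the start of the tail.
-/

open Filter Finset

/-- Real `liminf` is `0` on sequences unbounded below, so a positive bound below it is still
eventually exceeded. -/
lemma Real.eventually_lt_of_lt_liminf {u : ℕ → ℝ} {b : ℝ} (hb : 0 ≤ b)
    (h : b < liminf u atTop) : ∀ᶠ n in atTop, b < u n := by
  have hbdd : IsBoundedUnder (· ≥ ·) atTop u := by
    by_contra hu
    rw [Real.liminf_of_not_isBoundedUnder hu] at h
    exact hb.not_gt h
  exact Filter.eventually_lt_of_lt_liminf h hbdd

lemma summable_of_le_sub_succ {a b : ℕ → ℝ} (ha : ∀ n, 0 ≤ a n) (hb : ∀ n, 0 ≤ b n)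
    (h : ∀ n, a n ≤ b n - b (n + 1)) : Summable a := by
  refine summable_of_sum_range_le (c := b 0) ha fun n => ?_
  calc ∑ i ∈ range n, a i ≤ ∑ i ∈ range n, (b i - b (i + 1)) := sum_le_sum fun i _ => h i
    _ = b 0 - b n := sum_range_sub' b n
    _ ≤ b 0 := sub_le_self _ (hb n)

lemma summable_of_eventually_le_sub_succ {a b : ℕ → ℝ} (ha : ∀ n, 0 ≤ a n)
    (hb : ∀ᶠ n in atTop, 0 ≤ b n) (h : ∀ᶠ n in atTop, a n ≤ b n - b (n + 1)) : Summable a := by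
  obtain ⟨M, hM⟩ := eventually_atTop.mp (hb.and h)
  refine (summable_nat_add_iff M).mp (summable_of_le_sub_succ (b := fun n => b (n + M))
    (fun n => ha _) (fun n => (hM _ (Nat.le_add_left _ _)).1) fun n => ?_)
  simpa only [Nat.add_right_comm n 1 M] using (hM _ (Nat.le_add_left _ _)).2

lemma mul_le_sub_of_le_mul_div_sub {a₀ a₁ z₀ z₁ c : ℝ} (ha₁ : 0 < a₁)
    (hc : c ≤ z₀ * (a₀ / a₁) - z₁) :
    c * a₁ ≤ z₀ * a₀ - z₁ * a₁ :=
  calc c * a₁ ≤ (z₀ * (a₀ / a₁) - z₁) * a₁ := mul_le_mul_of_nonneg_right hc ha₁.le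
    _ = z₀ * a₀ - z₁ * a₁ := by field_simp

/-- **Kummer's test, convergence part.** -/
theorem kummer_test_convergence
    (a : ℕ → ℝ) (ha : ∀ n, 0 < a n) (N : ℕ) (ζ : ℕ → ℝ) (hζ : ∀ n ≥ N, 0 < ζ n)
    (hρ : 0 < Filter.liminf
      (fun n => ζ n * (a n / a (n + 1)) - ζ (n + 1)) Filter.atTop) :
    Summable a := by
  set c := Filter.liminf (fun n => ζ n * (a n / a (n + 1)) - ζ (n + 1)) Filter.atTop / 2
  have hc : 0 < c := half_pos hρ
  have hρc := Real.eventually_lt_of_lt_liminf hc.le (half_lt_self hρ)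
  have htail : Summable fun n => c * a (n + 1) :=
    summable_of_eventually_le_sub_succ (b := fun n => ζ n * a n)
      (fun n => (mul_pos hc (ha _)).le)
      ((eventually_ge_atTop N).mono fun n hn => (mul_pos (hζ n hn) (ha n)).le)
      (hρc.mono fun n hn => mul_le_sub_of_le_mul_div_sub (ha (n + 1)) hn.le)
  exact (summable_nat_add_iff 1).mp ((summable_mul_left_iff hc.ne').mp htail)
end

section
/- (Kummer's test, divergence part.) Let (a_n) be a sequence of positive real numbers and let (ζ_n) be a sequence of positive real numbers defined for all n ≥ N for some N. Define ρ_n = ζ_n·(a_n/a_{n+1}) − ζ_{n+1}. If limsup_{n→∞} ρ_n < 0 and ∑_{n=N}^∞ 1/ζ_n = ∞, then the series ∑_{n=1}^∞ a_n diverges (is not summable). -/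
/-!
Eventually `ρ n < 0`, which says `ζ n * a n < ζ (n + 1) * a (n + 1)`. So `ζ n * a n` is eventually
bounded below by some `c > 0`, whence `1 / ζ n ≤ a n / c`, and summability of `a` would force
summability of `1 / ζ n`.
-/

open Filter

/-- An unbounded real `limsup` is `0`, so the hypothesis `b ≤ 0` replaces the
boundedness assumption of `Filter.eventually_lt_of_limsup_lt`. -/
theorem Real.eventually_lt_of_limsup_lt_of_nonpos {ι : Type*} {f : Filter ι} {u : ι → ℝ} {b : ℝ}
    (h : limsup u f < b) (hb : b ≤ 0) : ∀ᶠ i in f, u i < b := by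
  by_cases hu : f.IsBoundedUnder (· ≤ ·) u
  · exact eventually_lt_of_limsup_lt h hu
  · rw [Real.limsup_of_not_isBoundedUnder hu] at h
    exact absurd h hb.not_gt

theorem mul_lt_mul_of_mul_div_sub_neg {x y z w : ℝ} (hy : 0 < y) (h : z * (x / y) - w < 0) :
    z * x < w * y := by
  rw [sub_neg, mul_div_assoc', div_lt_iff₀ hy] at h
  exact h

theorem summable_one_div_of_le_mul {a ζ : ℕ → ℝ} {c : ℝ} (hc : 0 < c) (ha : Summable a)
    (h : ∀ᶠ n in atTop, 0 < ζ n ∧ c ≤ ζ n * a n) : Summable fun n => 1 / ζ n := by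
  refine (ha.div_const c).of_norm_bounded_eventually_nat (h.mono fun n ⟨hζ, hle⟩ => ?_)
  rw [Real.norm_of_nonneg (one_div_pos.2 hζ).le, div_le_div_iff₀ hζ hc]
  linarith

/-- **Kummer's test, divergence part.** -/
theorem kummer_test_divergence
    (a : ℕ → ℝ) (ha : ∀ n, 0 < a n) (N : ℕ) (ζ : ℕ → ℝ) (hζ : ∀ n ≥ N, 0 < ζ n)
    (hρ : Filter.limsup
      (fun n => ζ n * (a n / a (n + 1)) - ζ (n + 1)) Filter.atTop < 0)
    (hdiv : ¬ Summable (fun n : ℕ => 1 / ζ (N + n))) :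
    ¬ Summable a := by
  intro hsum
  obtain ⟨M, hM⟩ := eventually_atTop.1 <|
    (Real.eventually_lt_of_limsup_lt_of_nonpos hρ le_rfl).and (eventually_ge_atTop N)
  have hstep : ∀ n ≥ M, ζ n * a n ≤ ζ (n + 1) * a (n + 1) := fun n hn =>
    (mul_lt_mul_of_mul_div_sub_neg (ha (n + 1)) (hM n hn).1).le
  have hbound : ∀ᶠ n in atTop, 0 < ζ n ∧ ζ M * a M ≤ ζ n * a n :=
    eventually_atTop.2 ⟨M, fun n hn =>
      ⟨hζ n (hM n hn).2, Nat.rel_of_forall_rel_succ_of_le_of_le (· ≤ ·) hstep le_rfl hn⟩⟩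
  have hc : 0 < ζ M * a M := mul_pos (hζ M (hM M le_rfl).2) (ha M)
  refine hdiv ?_
  simpa only [add_comm N] using
    (summable_nat_add_iff N).2 (summable_one_div_of_le_mul hc hsum hbound)
end

section
/- For every integer k ≥ 1 and every integer i ≥ 1, for all sufficiently large x the i-th and (i+1)-st derivatives of f_k(x) = ln_{(k)} x have opposite signs: f_k^{(i)}(x)·f_k^{(i+1)}(x) < 0. -/
/-!
With `u j = (log^[j])⁻¹` we have `(log^[k])' = u 0 ⋯ u (k-1)` and `(u j)' = -u j · u 0 ⋯ u j`.
So on a half-line where every `log^[j]`, `j < k`, is positive, `-d/dx` maps sums of nonempty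
products of the `u j` to sums of nonempty products of the `u j`, which are positive functions.
Hence `(-1)^n (log^[k])^(n+1)` is positive there for every `n`.
-/

open Filter Finset Set Real

/-- Functions that agree on `s` with a polynomial in the members of `G` with positive integer
coefficients and no constant term. -/
inductive PosPolyOn (s : Set ℝ) (G : Set (ℝ → ℝ)) : (ℝ → ℝ) → Prop
  | of {g : ℝ → ℝ} : g ∈ G → PosPolyOn s G g
  | add {f g : ℝ → ℝ} : PosPolyOn s G f → PosPolyOn s G g → PosPolyOn s G (f + g)
  | mul {f g : ℝ → ℝ} : PosPolyOn s G f → PosPolyOn s G g → PosPolyOn s G (f * g)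
  | congr {f g : ℝ → ℝ} : PosPolyOn s G f → EqOn f g s → PosPolyOn s G g

namespace PosPolyOn

variable {s : Set ℝ} {G : Set (ℝ → ℝ)} {f : ℝ → ℝ}

theorem prod {ι : Type*} {t : Finset ι} (ht : t.Nonempty) {F : ι → ℝ → ℝ}
    (hF : ∀ i ∈ t, PosPolyOn s G (F i)) : PosPolyOn s G (∏ i ∈ t, F i) := by
  classical
  induction ht using Finset.Nonempty.cons_induction with
  | singleton i => simpa using hF i (mem_singleton_self i)
  | cons i t _ _ ih =>
    rw [prod_cons]
    exact .mul (hF i (mem_cons_self i t)) (ih fun j hj => hF j (mem_cons_of_mem hj))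

theorem pos (hG : ∀ g ∈ G, ∀ x ∈ s, 0 < g x) (hf : PosPolyOn s G f) : ∀ x ∈ s, 0 < f x := by
  induction hf with
  | of hg => exact hG _ hg
  | add _ _ ihf ihg => exact fun x hx => add_pos (ihf x hx) (ihg x hx)
  | mul _ _ ihf ihg => exact fun x hx => mul_pos (ihf x hx) (ihg x hx)
  | congr _ hfg ih => exact fun x hx => hfg hx ▸ ih x hx

theorem exists_hasDerivAt_neg (hs : IsOpen s)
    (hG : ∀ g ∈ G, ∃ g', PosPolyOn s G g' ∧ ∀ x ∈ s, HasDerivAt g (-g' x) x)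
    (hf : PosPolyOn s G f) : ∃ f', PosPolyOn s G f' ∧ ∀ x ∈ s, HasDerivAt f (-f' x) x := by
  induction hf with
  | of hg => exact hG _ hg
  | add _ _ ihf ihg =>
    obtain ⟨f', hf', df⟩ := ihf
    obtain ⟨g', hg', dg⟩ := ihg
    refine ⟨f' + g', .add hf' hg', fun x hx => ?_⟩
    exact ((df x hx).add (dg x hx)).congr_deriv (by simp only [Pi.add_apply]; ring)
  | @mul f g hf hg ihf ihg =>
    obtain ⟨f', hf', df⟩ := ihf
    obtain ⟨g', hg', dg⟩ := ihg
    refine ⟨f' * g + f * g', .add (.mul hf' hg) (.mul hf hg'), fun x hx => ?_⟩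
    exact ((df x hx).mul (dg x hx)).congr_deriv
      (by simp only [Pi.add_apply, Pi.mul_apply]; ring)
  | congr _ hfg ih =>
    obtain ⟨f', hf', df⟩ := ih
    exact ⟨f', hf', fun x hx =>
      (df x hx).congr_of_eventuallyEq (hfg.symm.eventuallyEq_of_mem (hs.mem_nhds hx))⟩

theorem neg_deriv (hs : IsOpen s)
    (hG : ∀ g ∈ G, ∃ g', PosPolyOn s G g' ∧ ∀ x ∈ s, HasDerivAt g (-g' x) x)
    (hf : PosPolyOn s G f) : PosPolyOn s G (-deriv f) := by
  obtain ⟨f', hf', df⟩ := hf.exists_hasDerivAt_neg hs hG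
  exact hf'.congr fun x hx => by simp [(df x hx).deriv]

theorem neg_one_pow_mul_iteratedDeriv (hs : IsOpen s)
    (hG : ∀ g ∈ G, ∃ g', PosPolyOn s G g' ∧ ∀ x ∈ s, HasDerivAt g (-g' x) x)
    (hf : PosPolyOn s G f) (n : ℕ) :
    PosPolyOn s G fun x => (-1) ^ n * iteratedDeriv n f x := by
  induction n with
  | zero => simpa using hf
  | succ n ih =>
    convert ih.neg_deriv hs hG using 1
    ext x
    simp [deriv_const_mul_field', iteratedDeriv_succ, pow_succ]

theorem iteratedDeriv_mul_iteratedDeriv_succ_neg (hs : IsOpen s)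
    (hG_pos : ∀ g ∈ G, ∀ x ∈ s, 0 < g x)
    (hG : ∀ g ∈ G, ∃ g', PosPolyOn s G g' ∧ ∀ x ∈ s, HasDerivAt g (-g' x) x)
    (hf : PosPolyOn s G f) (n : ℕ) {x : ℝ} (hx : x ∈ s) :
    iteratedDeriv n f x * iteratedDeriv (n + 1) f x < 0 := by
  have h₀ := (hf.neg_one_pow_mul_iteratedDeriv hs hG n).pos hG_pos x hx
  have h₁ := (hf.neg_one_pow_mul_iteratedDeriv hs hG (n + 1)).pos hG_pos x hx
  have hsq : ((-1 : ℝ) ^ n) ^ 2 = 1 := by rw [← pow_mul, pow_mul']; norm_num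
  have hprod : (-1) ^ n * iteratedDeriv n f x * ((-1) ^ (n + 1) * iteratedDeriv (n + 1) f x) =
      -(iteratedDeriv n f x * iteratedDeriv (n + 1) f x) := by
    linear_combination -(iteratedDeriv n f x * iteratedDeriv (n + 1) f x) * hsq
  linarith [mul_pos h₀ h₁]

end PosPolyOn

theorem hasDerivAt_log_iterate {n : ℕ} {x : ℝ} (hx : ∀ l < n, log^[l] x ≠ 0) :
    HasDerivAt log^[n] (∏ l ∈ range n, (log^[l] x)⁻¹) x := by
  induction n with
  | zero => simpa using hasDerivAt_id x
  | succ n ih =>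
    have h := (ih fun l hl => hx l (by omega)).log (hx n n.lt_succ_self)
    rw [Function.iterate_succ', prod_range_succ, ← div_eq_mul_inv]
    exact h

theorem hasDerivAt_inv_log_iterate {j : ℕ} {x : ℝ} (hx : ∀ l ≤ j, log^[l] x ≠ 0) :
    HasDerivAt (fun y => (log^[j] y)⁻¹)
      (-((log^[j] x)⁻¹ * ∏ l ∈ range (j + 1), (log^[l] x)⁻¹)) x := by
  refine ((hasDerivAt_log_iterate fun l hl => hx l hl.le).inv (hx j le_rfl)).congr_deriv ?_
  rw [prod_range_succ]
  ring

def invLogIterates (k : ℕ) : Set (ℝ → ℝ) := {g | ∃ j < k, g = fun x => (log^[j] x)⁻¹}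

theorem posPolyOn_prod_inv_log_iterate {k m : ℕ} {a : ℝ} (hm₀ : m ≠ 0) (hmk : m ≤ k) :
    PosPolyOn (Ioi a) (invLogIterates k) (∏ l ∈ range m, fun x => (log^[l] x)⁻¹) :=
  .prod (nonempty_range_iff.2 hm₀) fun l hl => .of ⟨l, by simp at hl; omega, rfl⟩

theorem iteratedDeriv_deriv_log_iterate_mul_succ_neg {k : ℕ} {a : ℝ} (hk : k ≠ 0)
    (ha : ∀ x > a, ∀ j < k, 0 < log^[j] x) (n : ℕ) {x : ℝ} (hx : a < x) :
    iteratedDeriv n (deriv log^[k]) x * iteratedDeriv (n + 1) (deriv log^[k]) x < 0 := by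
  set G := invLogIterates k
  have hG_pos : ∀ g ∈ G, ∀ y ∈ Ioi a, 0 < g y := by
    rintro _ ⟨j, hj, rfl⟩ y hy
    exact inv_pos.2 (ha y hy j hj)
  have hG : ∀ g ∈ G, ∃ g', PosPolyOn (Ioi a) G g' ∧ ∀ y ∈ Ioi a, HasDerivAt g (-g' y) y := by
    rintro _ ⟨j, hj, rfl⟩
    refine ⟨(fun y => (log^[j] y)⁻¹) * ∏ l ∈ range (j + 1), fun y => (log^[l] y)⁻¹,
      .mul (.of ⟨j, hj, rfl⟩) (posPolyOn_prod_inv_log_iterate j.succ_ne_zero hj), fun y hy => ?_⟩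
    simpa using hasDerivAt_inv_log_iterate fun l hl => (ha y hy l (by omega)).ne'
  have hf : PosPolyOn (Ioi a) G (deriv log^[k]) :=
    (posPolyOn_prod_inv_log_iterate hk le_rfl).congr fun y hy => by
      simp [(hasDerivAt_log_iterate fun l hl => (ha y hy l hl).ne').deriv]
  exact hf.iteratedDeriv_mul_iteratedDeriv_succ_neg isOpen_Ioi hG_pos hG n hx

/-- For `k ≥ 1` and `i ≥ 1`, for all sufficiently large `x` the `i`-th and
`(i+1)`-st derivatives of `f_k(x) = ln_{(k)} x` have opposite signs.
Here `Real.log^[k]` is the `k`-th iterate of `Real.log`. -/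
theorem iterated_log_derivatives_alternate (k : ℕ) (hk : 1 ≤ k) (i : ℕ) (hi : 1 ≤ i) :
    ∀ᶠ x : ℝ in Filter.atTop,
      iteratedDeriv i (fun y : ℝ => Real.log^[k] y) x *
        iteratedDeriv (i + 1) (fun y : ℝ => Real.log^[k] y) x < 0 := by
  have hpos : ∀ᶠ x in atTop, ∀ j ∈ range k, 0 < log^[j] x :=
    (eventually_all_finset _).2 fun j _ => (tendsto_log_atTop.iterate j).eventually_gt_atTop 0
  obtain ⟨a, ha⟩ := eventually_atTop.1 hpos
  obtain ⟨n, rfl⟩ := Nat.exists_eq_add_of_le' hi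
  filter_upwards [eventually_gt_atTop a] with x hx
  rw [iteratedDeriv_succ', iteratedDeriv_succ']
  exact iteratedDeriv_deriv_log_iterate_mul_succ_neg (by omega)
    (fun y hy j hj => ha y hy.le j (mem_range.2 hj)) n hx
end

section
/- For every integer k ≥ 2, as x → ∞ one has the expansion ln_{(k)}(x+1) = ln_{(k)}(x) + 1/(x·∏_{j=1}^{k-1} ln_{(j)} x) + o(1/x²); that is, x²·(ln_{(k)}(x+1) − ln_{(k)}(x) − 1/(x·∏_{j=1}^{k-1} ln_{(j)} x)) → 0 as x → ∞. -/
/-!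
By the mean value theorem, `ln_{(k)}(x+1) - ln_{(k)}(x) = 1/g(ξ)` for some `ξ ∈ (x, x+1)`,
where `g(t) = t · ∏_{j=1}^{k-1} ln_{(j)} t` is the reciprocal of the derivative of `ln_{(k)}`.
Since `g` is increasing, the error is at most `1/g(x) - 1/g(x+1)`. As `ln t / t` decreases
beyond `e`, every factor satisfies `ln_{(j)}(x+1) ≤ (1 + 1/x) ln_{(j)} x`, so
`g(x+1) ≤ (1 + 1/x)^k g(x)`, and Bernoulli's inequality bounds the error by
`k / ((x+1) g(x)) ≤ k / (x² ln x)`.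
-/

open Real Filter Finset

lemma tendsto_iterate_log_atTop (n : ℕ) : Tendsto log^[n] atTop atTop := by
  induction n with
  | zero => exact tendsto_id
  | succ n ih => simpa only [Function.iterate_succ'] using tendsto_log_atTop.comp ih

lemma iterate_log_le_iterate_log {x y : ℝ} (hxy : x ≤ y) {n : ℕ}
    (hx : ∀ j < n, 0 < log^[j] x) : log^[n] x ≤ log^[n] y := by
  induction n with
  | zero => exact hxy
  | succ n ih =>
    simp only [Function.iterate_succ_apply']
    exact log_le_log (hx n n.lt_succ_self) (ih fun j hj => hx j (hj.trans n.lt_succ_self))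

lemma iterate_log_le_div_mul {x y : ℝ} (hx : 0 < x) (hxy : x ≤ y) {n : ℕ}
    (he : ∀ j < n, exp 1 ≤ log^[j] x) : log^[n] y ≤ y / x * log^[n] x := by
  induction n with
  | zero => simp [hx.ne']
  | succ n ih =>
    have he' : ∀ j < n, exp 1 ≤ log^[j] x := fun j hj => he j (hj.trans n.lt_succ_self)
    set a := log^[n] x
    set b := log^[n] y
    have ha : exp 1 ≤ a := he n n.lt_succ_self
    have hab : a ≤ b := iterate_log_le_iterate_log hxy fun j hj => (exp_pos 1).trans_le (he' j hj)
    have ha0 : 0 < a := (exp_pos 1).trans_le ha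
    have hb0 : 0 < b := ha0.trans_le hab
    have hslope : log b / b ≤ log a / a := log_div_self_antitoneOn ha (ha.trans hab) hab
    have hloga : 0 ≤ log a / a :=
      div_nonneg (log_nonneg ((one_le_exp zero_le_one).trans ha)) ha0.le
    simp only [Function.iterate_succ_apply']
    calc log b = b * (log b / b) := by field_simp
      _ ≤ b * (log a / a) := mul_le_mul_of_nonneg_left hslope hb0.le
      _ ≤ (y / x * a) * (log a / a) := by gcongr; exact ih he'
      _ = y / x * log a := by field_simp

noncomputable def iteratedLogProd (n : ℕ) (x : ℝ) : ℝ := ∏ j ∈ range n, log^[j] x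

lemma iteratedLogProd_pos {n : ℕ} {x : ℝ} (hx : ∀ j < n, 0 < log^[j] x) :
    0 < iteratedLogProd n x :=
  prod_pos fun j hj => hx j (mem_range.1 hj)

lemma iteratedLogProd_le_iteratedLogProd {n : ℕ} {x y : ℝ} (hxy : x ≤ y)
    (hx : ∀ j < n, 0 < log^[j] x) : iteratedLogProd n x ≤ iteratedLogProd n y :=
  prod_le_prod (fun j hj => (hx j (mem_range.1 hj)).le) fun _ hj =>
    iterate_log_le_iterate_log hxy fun i hi => hx i (hi.trans (mem_range.1 hj))

lemma iteratedLogProd_le_div_pow_mul {n : ℕ} {x y : ℝ} (hx : 0 < x) (hxy : x ≤ y)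
    (he : ∀ j < n, exp 1 ≤ log^[j] x) :
    iteratedLogProd n y ≤ (y / x) ^ n * iteratedLogProd n x := by
  have hpos : ∀ j < n, 0 < log^[j] x := fun j hj => (exp_pos 1).trans_le (he j hj)
  calc iteratedLogProd n y ≤ ∏ j ∈ range n, y / x * log^[j] x := by
        refine prod_le_prod (fun j hj => ?_) fun j hj => ?_
        · exact (hpos j (mem_range.1 hj)).le.trans
            (iterate_log_le_iterate_log hxy fun i hi => hpos i (hi.trans (mem_range.1 hj)))
        · exact iterate_log_le_div_mul hx hxy fun i hi => he i (hi.trans (mem_range.1 hj))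
    _ = (y / x) ^ n * iteratedLogProd n x := by
        rw [prod_mul_distrib, prod_const, card_range, iteratedLogProd]

lemma inv_iteratedLogProd_sub_inv_le {n : ℕ} {x y : ℝ} (hx : 0 < x) (hxy : x ≤ y)
    (he : ∀ j < n, exp 1 ≤ log^[j] x) :
    (iteratedLogProd n x)⁻¹ - (iteratedLogProd n y)⁻¹ ≤
      n * (y - x) / (y * iteratedLogProd n x) := by
  have hpos : ∀ j < n, 0 < log^[j] x := fun j hj => (exp_pos 1).trans_le (he j hj)
  have hg := iteratedLogProd_pos hpos
  have hy : 0 < y := hx.trans_le hxy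
  have hbern : 1 + n * (x / y - 1) ≤ (x / y) ^ n :=
    one_add_mul_sub_le_pow (by linarith [div_nonneg hx.le hy.le]) n
  have hgy : (iteratedLogProd n y)⁻¹ ≥ (1 + n * (x / y - 1)) * (iteratedLogProd n x)⁻¹ :=
    calc (iteratedLogProd n y)⁻¹ ≥ ((y / x) ^ n * iteratedLogProd n x)⁻¹ :=
          inv_anti₀ (hg.trans_le (iteratedLogProd_le_iteratedLogProd hxy hpos))
            (iteratedLogProd_le_div_pow_mul hx hxy he)
      _ = (x / y) ^ n * (iteratedLogProd n x)⁻¹ := by rw [mul_inv, ← inv_pow, inv_div]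
      _ ≥ (1 + n * (x / y - 1)) * (iteratedLogProd n x)⁻¹ := by gcongr
  calc (iteratedLogProd n x)⁻¹ - (iteratedLogProd n y)⁻¹
      ≤ (iteratedLogProd n x)⁻¹ - (1 + n * (x / y - 1)) * (iteratedLogProd n x)⁻¹ := by
        linarith
    _ = n * (y - x) / (y * iteratedLogProd n x) := by field_simp; ring

lemma mul_log_le_iteratedLogProd {n : ℕ} (hn : 2 ≤ n) {x : ℝ}
    (h : ∀ j < n, 1 ≤ log^[j] x) :
    x * log x ≤ iteratedLogProd n x := by
  induction n, hn using Nat.le_induction with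
  | base => simp [iteratedLogProd, prod_range_succ]
  | succ n hn ih =>
    rw [iteratedLogProd, prod_range_succ, ← iteratedLogProd]
    have hg := iteratedLogProd_pos fun j (hj : j < n) =>
      one_pos.trans_le (h j (hj.trans n.lt_succ_self))
    exact (ih fun j hj => h j (hj.trans n.lt_succ_self)).trans
      (le_mul_of_one_le_right hg.le (h n n.lt_succ_self))

lemma hasDerivAt_iterate_log {n : ℕ} {x : ℝ} (hx : ∀ j ≤ n, 0 < log^[j] x) :
    HasDerivAt log^[n + 1] (iteratedLogProd (n + 1) x)⁻¹ x := by
  induction n with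
  | zero => simpa [iteratedLogProd] using hasDerivAt_log (hx 0 le_rfl).ne'
  | succ n ih =>
    rw [Function.iterate_succ', iteratedLogProd, prod_range_succ, mul_inv, mul_comm,
      ← iteratedLogProd]
    exact (hasDerivAt_log (hx (n + 1) le_rfl).ne').comp x
      (ih fun j hj => hx j (hj.trans n.le_succ))

lemma mul_prod_Icc_iterate_log (m : ℕ) (x : ℝ) :
    x * ∏ j ∈ Icc 1 m, log^[j] x = iteratedLogProd (m + 1) x := by
  rw [iteratedLogProd, prod_range_succ', range_eq_Ico, prod_Ico_add' (fun j => log^[j] x),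
    zero_add, Ico_add_one_right_eq_Icc, mul_comm, Function.iterate_zero_apply]

lemma abs_sub_sub_mul_deriv_le_of_antitoneOn {f f' : ℝ → ℝ} {a b : ℝ} (hab : a < b)
    (hf : ∀ t ∈ Set.Icc a b, HasDerivAt f (f' t) t) (hf' : AntitoneOn f' (Set.Icc a b)) :
    |f b - f a - (b - a) * f' a| ≤ (b - a) * (f' a - f' b) := by
  obtain ⟨c, hc, hslope⟩ := exists_hasDerivAt_eq_slope f f' hab
    (fun t ht => (hf t ht).continuousAt.continuousWithinAt)
    fun t ht => hf t (Set.Ioo_subset_Icc_self ht)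
  have hfc : f b - f a = (b - a) * f' c := by rw [hslope]; field_simp [(sub_pos.2 hab).ne']
  have hca : f' c ≤ f' a := hf' (Set.left_mem_Icc.2 hab.le) (Set.Ioo_subset_Icc_self hc) hc.1.le
  have hbc : f' b ≤ f' c := hf' (Set.Ioo_subset_Icc_self hc) (Set.right_mem_Icc.2 hab.le) hc.2.le
  rw [hfc, ← mul_sub, abs_mul, abs_of_pos (sub_pos.2 hab), abs_of_nonpos (sub_nonpos.2 hca)]
  gcongr
  linarith

lemma exists_forall_ge_exp_one_le_iterate_log (n : ℕ) :
    ∃ a, ∀ t ≥ a, ∀ j < n, exp 1 ≤ log^[j] t := by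
  have h : ∀ j ∈ range n, ∀ᶠ t in atTop, exp 1 ≤ log^[j] t :=
    fun j _ => (tendsto_iterate_log_atTop j).eventually_ge_atTop (exp 1)
  obtain ⟨a, ha⟩ := eventually_atTop.1 ((eventually_all_finset _).2 h)
  exact ⟨a, fun t ht j hj => ha t ht j (mem_range.2 hj)⟩

lemma sq_mul_abs_iterate_log_sub_le {n : ℕ} (hn : 2 ≤ n) {x : ℝ}
    (he : ∀ t ≥ x, ∀ j < n, exp 1 ≤ log^[j] t) :
    x ^ 2 * |log^[n] (x + 1) - log^[n] x - (iteratedLogProd n x)⁻¹| ≤ n * (log x)⁻¹ := by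
  obtain ⟨m, rfl⟩ : ∃ m, n = m + 1 := ⟨n - 1, by omega⟩
  have hpos : ∀ t ≥ x, ∀ j < m + 1, 0 < log^[j] t :=
    fun t ht j hj => (exp_pos 1).trans_le (he t ht j hj)
  have hx : 0 < x := hpos x le_rfl 0 (by omega)
  have hlog : 0 < log x :=
    one_pos.trans_le ((one_le_exp zero_le_one).trans (he x le_rfl 1 (by omega)))
  have hderiv : ∀ t ∈ Set.Icc x (x + 1),
      HasDerivAt log^[m + 1] (iteratedLogProd (m + 1) t)⁻¹ t :=
    fun t ht => hasDerivAt_iterate_log fun j hj => hpos t ht.1 j (Nat.lt_succ_of_le hj)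
  have hanti : AntitoneOn (fun t => (iteratedLogProd (m + 1) t)⁻¹) (Set.Icc x (x + 1)) :=
    fun s hs t _ hst => inv_anti₀ (iteratedLogProd_pos (hpos s hs.1))
      (iteratedLogProd_le_iteratedLogProd hst (hpos s hs.1))
  have hmvt := abs_sub_sub_mul_deriv_le_of_antitoneOn (lt_add_one x) hderiv hanti
  rw [add_sub_cancel_left, one_mul, one_mul] at hmvt
  have hstep :=
    inv_iteratedLogProd_sub_inv_le hx (le_add_of_nonneg_right zero_le_one) (he x le_rfl)
  have hprod := mul_log_le_iteratedLogProd hn fun j hj =>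
    (one_le_exp zero_le_one).trans (he x le_rfl j hj)
  calc x ^ 2 * |log^[m + 1] (x + 1) - log^[m + 1] x - (iteratedLogProd (m + 1) x)⁻¹|
      ≤ x ^ 2 * ((m + 1 : ℕ) * (x + 1 - x) / ((x + 1) * iteratedLogProd (m + 1) x)) := by
        gcongr; exact hmvt.trans hstep
    _ ≤ x ^ 2 * ((m + 1 : ℕ) / (x * (x * log x))) := by
        rw [add_sub_cancel_left, mul_one]
        have hxlog : 0 < x * (x * log x) := by positivity
        gcongr
        linarith
    _ = (m + 1 : ℕ) * (log x)⁻¹ := by field_simp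

/-- For `k ≥ 2`, as `x → ∞`,
`ln_{(k)}(x+1) = ln_{(k)}(x) + 1/(x · ∏_{j=1}^{k-1} ln_{(j)} x) + o(1/x²)`.
Here `Real.log^[k]` is the `k`-th iterate of `Real.log`. -/
theorem iterated_log_expansion (k : ℕ) (hk : 2 ≤ k) :
    Filter.Tendsto
      (fun x : ℝ => x ^ 2 *
        (Real.log^[k] (x + 1) - Real.log^[k] x -
          1 / (x * ∏ j ∈ Finset.Icc 1 (k - 1), Real.log^[j] x)))
      Filter.atTop (nhds 0) := by
  obtain ⟨a, ha⟩ := exists_forall_ge_exp_one_le_iterate_log k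
  have hbound : Tendsto (fun x => (k : ℝ) * (log x)⁻¹) atTop (nhds 0) := by
    simpa using (tendsto_inv_atTop_zero.comp tendsto_log_atTop).const_mul (k : ℝ)
  refine squeeze_zero_norm' ?_ hbound
  filter_upwards [eventually_ge_atTop a] with x hx
  rw [one_div, mul_prod_Icc_iterate_log, Nat.sub_add_cancel (by omega : 1 ≤ k), norm_mul,
    Real.norm_eq_abs, Real.norm_eq_abs, abs_of_nonneg (sq_nonneg x)]
  exact sq_mul_abs_iterate_log_sub_le hk fun t ht => ha t (hx.trans ht)
end

section
/- (Series form of the transience criterion for birth-and-death processes.) Let (λ_n) and (μ_n) be sequences of real numbers in (0, ∞), and suppose there exist a constant c > 1, an integer K ≥ 1 and an index n_0 such that for all n > n_0, λ_n/μ_n ≥ 1 + 1/n + (1/n)·∑_{k=1}^{K-1} 1/(∏_{j=1}^{k} ln_{(j)} n) + c/(n·∏_{j=1}^{K} ln_{(j)} n). Then the series ∑_{n=1}^∞ ∏_{k=1}^{n} (μ_k/λ_k) converges (equivalently, by Karlin–McGregor's criterion, the birth-and-death process with birth rates λ_n and death rates μ_n is transient). -/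
/-!
Fix `1 < s < c` and let `φ = logBertrand K s = log + log^[2] + ⋯ + log^[K] + s • log^[K+1]`,
so that `exp (-φ n) = 1 / (n log n ⋯ log^[K-1] n (log^[K] n) ^ s)` is the general term of a
convergent Bertrand series: it is dominated by the decrements of `(log^[K] x) ^ (1 - s) / (s - 1)`,
whose derivative is `-exp (-φ)`. As `φ'` decreases,
`exp (φ (n + 1) - φ n) ≤ exp (φ' n) ≤ 1 + φ' n + φ' n ^ 2`, and
`φ' n ^ 2 = o(1 / (n log n ⋯ log^[K] n))`, so the quadratic error is absorbed by raising `s`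
to `c` in the last term of `φ'`: eventually `exp (φ (n + 1) - φ n) ≤ λₙ / μₙ`. Hence
`(∏ k ≤ n, μₖ / λₖ) * exp (φ (n + 1))` is eventually nonincreasing, and the series converges
by comparison.
-/

open Real Filter Finset Topology

theorem summable_of_le_sub_succ_s15 {b g : ℕ → ℝ} (hb : ∀ n, 0 ≤ b n)
    (hg : ∀ᶠ n in atTop, 0 ≤ g n) (h : ∀ᶠ n in atTop, b n ≤ g n - g (n + 1)) :
    Summable b := by
  obtain ⟨N, hN⟩ := eventually_atTop.mp (hg.and h)
  refine (summable_nat_add_iff N).mp (summable_of_sum_range_le (c := g N) (fun n => hb _) ?_)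
  intro M
  calc ∑ i ∈ range M, b (i + N)
      ≤ ∑ i ∈ range M, (g (i + N) - g (i + 1 + N)) :=
        sum_le_sum fun i _ => by simpa [add_right_comm] using (hN (i + N) (by omega)).2
    _ = g N - g (M + N) := by rw [sum_range_sub' (fun i => g (i + N)), zero_add]
    _ ≤ g N := sub_le_self _ (hN (M + N) (by omega)).1

theorem summable_of_ratio_le_ratio {a b : ℕ → ℝ} (ha : ∀ n, 0 < a n) (hb : ∀ n, 0 < b n)
    (hbs : Summable b) (h : ∀ᶠ n in atTop, a (n + 1) / a n ≤ b (n + 1) / b n) :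
    Summable a := by
  obtain ⟨N, hN⟩ := eventually_atTop.mp h
  have hmono : ∀ n ≥ N, a n / b n ≤ a N / b N := by
    intro n hn
    induction n, hn using Nat.le_induction with
    | base => rfl
    | succ n hn ih =>
      refine le_trans ?_ ih
      rw [div_le_div_iff₀ (hb _) (hb _)]
      have := hN n hn
      rw [div_le_div_iff₀ (ha _) (hb _)] at this
      linarith
  refine hbs.mul_left (a N / b N) |>.of_norm_bounded_eventually_nat ?_
  filter_upwards [eventually_ge_atTop N] with n hn
  rw [Real.norm_of_nonneg (ha n).le, ← div_le_iff₀ (hb n)]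
  exact hmono n hn

theorem sub_le_of_hasDerivAt_le {f f' : ℝ → ℝ} {a b C : ℝ} (hab : a < b)
    (hf : ∀ x ∈ Set.Icc a b, HasDerivAt f (f' x) x) (hC : ∀ x ∈ Set.Ioo a b, f' x ≤ C) :
    f b - f a ≤ C * (b - a) := by
  obtain ⟨ξ, hξ, hslope⟩ := exists_hasDerivAt_eq_slope f f' hab
    (fun x hx => (hf x hx).continuousAt.continuousWithinAt)
    (fun x hx => hf x (Set.Ioo_subset_Icc_self hx))
  rw [← div_le_iff₀ (sub_pos.2 hab), ← hslope]
  exact hC ξ hξ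

namespace Real

theorem tendsto_log_iterate_atTop (i : ℕ) : Tendsto log^[i] atTop atTop :=
  tendsto_log_atTop.iterate i

theorem eventually_one_le_log_iterate (j : ℕ) : ∀ᶠ x in atTop, ∀ i ≤ j, 1 ≤ log^[i] x :=
  (Set.finite_le_nat j).eventually_all.2 fun i _ =>
    (tendsto_log_iterate_atTop i).eventually_ge_atTop 1

theorem log_iterate_le_log_iterate {j : ℕ} {x y : ℝ} (hx : ∀ i < j, 0 < log^[i] x)
    (hxy : x ≤ y) : log^[j] x ≤ log^[j] y := by
  induction j with
  | zero => exact hxy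
  | succ j ih =>
    simp only [Function.iterate_succ_apply']
    exact log_le_log (hx j j.lt_succ_self) (ih fun i hi => hx i (by omega))

theorem one_le_log_iterate_of_le {j : ℕ} {x y : ℝ} (hx : ∀ i ≤ j, 1 ≤ log^[i] x)
    (hxy : x ≤ y) : ∀ i ≤ j, 1 ≤ log^[i] y := fun i hi =>
  (hx i hi).trans <| log_iterate_le_log_iterate (fun k hk => one_pos.trans_le (hx k (by omega))) hxy

theorem log_iterate_le_log {j : ℕ} {x : ℝ} (hj : 1 ≤ j) (hx : ∀ i < j, 0 < log^[i] x) :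
    log^[j] x ≤ log x := by
  induction j, hj using Nat.le_induction with
  | base => rfl
  | succ j hj ih =>
    rw [Function.iterate_succ_apply']
    exact (log_le_self (hx j j.lt_succ_self).le).trans (ih fun i hi => hx i (by omega))

noncomputable def logIterProd (j : ℕ) (x : ℝ) : ℝ := ∏ i ∈ range j, log^[i] x

theorem hasDerivAt_log_iterate {j : ℕ} {x : ℝ} (hx : ∀ i < j, 0 < log^[i] x) :
    HasDerivAt log^[j] (logIterProd j x)⁻¹ x := by
  induction j with
  | zero => simpa [logIterProd] using hasDerivAt_id x
  | succ j ih =>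
    rw [Function.iterate_succ', logIterProd, prod_range_succ, mul_inv, mul_comm]
    exact (hasDerivAt_log (hx j j.lt_succ_self).ne').comp x (ih fun i hi => hx i (by omega))

theorem logIterProd_pos {j : ℕ} {x : ℝ} (hx : ∀ i < j, 0 < log^[i] x) :
    0 < logIterProd j x :=
  prod_pos fun i hi => hx i (mem_range.1 hi)

theorem logIterProd_le_logIterProd {j : ℕ} {x y : ℝ} (hx : ∀ i < j, 0 < log^[i] x)
    (hxy : x ≤ y) : logIterProd j x ≤ logIterProd j y :=
  prod_le_prod (fun i hi => (hx i (mem_range.1 hi)).le) fun _ hi =>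
    log_iterate_le_log_iterate (fun k hk => hx k (hk.trans (mem_range.1 hi))) hxy

theorem logIterProd_succ (j : ℕ) (x : ℝ) :
    logIterProd (j + 1) x = x * ∏ i ∈ Icc 1 j, log^[i] x := by
  rw [logIterProd, prod_range_succ', ← Ico_add_one_right_eq_Icc, prod_Ico_eq_prod_range]
  simp [mul_comm, add_comm]

theorem self_le_logIterProd_succ {j : ℕ} {x : ℝ} (hx : ∀ i ≤ j, 1 ≤ log^[i] x) :
    x ≤ logIterProd (j + 1) x := by
  rw [logIterProd_succ]
  have hx0 : 1 ≤ x := hx 0 j.zero_le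
  exact le_mul_of_one_le_right (by linarith) (one_le_prod fun i hi => hx i (mem_Icc.1 hi).2)

theorem logIterProd_succ_le {j : ℕ} {x : ℝ} (hx : ∀ i ≤ j, 0 < log^[i] x) :
    logIterProd (j + 1) x ≤ x * log x ^ j := by
  rw [logIterProd_succ]
  refine mul_le_mul_of_nonneg_left ?_ (by simpa using (hx 0 j.zero_le).le)
  calc ∏ i ∈ Icc 1 j, log^[i] x ≤ ∏ _i ∈ Icc 1 j, log x :=
        prod_le_prod (fun i hi => (hx i (mem_Icc.1 hi).2).le) fun i hi =>
          log_iterate_le_log (mem_Icc.1 hi).1 fun k hk => hx k (by grind)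
    _ = log x ^ j := by simp

noncomputable def logBertrand (K : ℕ) (s x : ℝ) : ℝ :=
  ∑ j ∈ range K, log^[j + 1] x + s * log^[K + 1] x

noncomputable def logBertrandDeriv (K : ℕ) (s x : ℝ) : ℝ :=
  ∑ j ∈ range K, (logIterProd (j + 1) x)⁻¹ + s * (logIterProd (K + 1) x)⁻¹

section logBertrand

variable {K : ℕ} {s x y : ℝ}

theorem hasDerivAt_logBertrand (hx : ∀ i ≤ K, 0 < log^[i] x) :
    HasDerivAt (logBertrand K s) (logBertrandDeriv K s x) x := by
  have hderiv : ∀ j ≤ K + 1, HasDerivAt log^[j] (logIterProd j x)⁻¹ x := fun j hj =>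
    hasDerivAt_log_iterate fun i hi => hx i (by omega)
  refine .add (.fun_sum fun j hj => hderiv (j + 1) ?_) ((hderiv (K + 1) le_rfl).const_mul s)
  have := mem_range.1 hj
  omega

theorem logBertrand_le_logBertrand (hs : 0 ≤ s) (hx : ∀ i ≤ K, 0 < log^[i] x)
    (hxy : x ≤ y) : logBertrand K s x ≤ logBertrand K s y := by
  have hmono : ∀ j ≤ K, log^[j + 1] x ≤ log^[j + 1] y := fun j hj =>
    log_iterate_le_log_iterate (fun i hi => hx i (by omega)) hxy
  exact add_le_add (sum_le_sum fun j hj => hmono j (mem_range.1 hj).le)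
    (mul_le_mul_of_nonneg_left (hmono K le_rfl) hs)

theorem logBertrandDeriv_le_logBertrandDeriv (hs : 0 ≤ s) (hx : ∀ i ≤ K, 0 < log^[i] x)
    (hxy : x ≤ y) : logBertrandDeriv K s y ≤ logBertrandDeriv K s x := by
  have hanti : ∀ j ≤ K, (logIterProd (j + 1) y)⁻¹ ≤ (logIterProd (j + 1) x)⁻¹ := by
    intro j hj
    have hx' : ∀ i < j + 1, 0 < log^[i] x := fun i hi => hx i (by omega)
    exact inv_anti₀ (logIterProd_pos hx') (logIterProd_le_logIterProd hx' hxy)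
  exact add_le_add (sum_le_sum fun j hj => hanti j (mem_range.1 hj).le)
    (mul_le_mul_of_nonneg_left (hanti K le_rfl) hs)

theorem logBertrandDeriv_nonneg (hs : 0 ≤ s) (hx : ∀ i ≤ K, 0 < log^[i] x) :
    0 ≤ logBertrandDeriv K s x := by
  have hpos : ∀ j ≤ K, 0 ≤ (logIterProd (j + 1) x)⁻¹ := fun j hj =>
    inv_nonneg.2 (logIterProd_pos fun i hi => hx i (by omega)).le
  exact add_nonneg (sum_nonneg fun j hj => hpos j (mem_range.1 hj).le)
    (mul_nonneg hs (hpos K le_rfl))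

theorem logBertrandDeriv_le (hs : 0 ≤ s) (hx : ∀ i ≤ K, 1 ≤ log^[i] x) :
    logBertrandDeriv K s x ≤ (K + s) / x := by
  have hx0 : 0 < x := one_pos.trans_le (hx 0 K.zero_le)
  have hle : ∀ j ≤ K, (logIterProd (j + 1) x)⁻¹ ≤ x⁻¹ := fun j hj =>
    inv_anti₀ hx0 (self_le_logIterProd_succ fun i hi => hx i (by omega))
  calc logBertrandDeriv K s x ≤ ∑ _j ∈ range K, x⁻¹ + s * x⁻¹ :=
        add_le_add (sum_le_sum fun j hj => hle j (mem_range.1 hj).le)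
          (mul_le_mul_of_nonneg_left (hle K le_rfl) hs)
    _ = (K + s) / x := by simp [div_eq_mul_inv, add_mul]

theorem exp_neg_logBertrand (hx : ∀ i ≤ K, 0 < log^[i] x) :
    exp (-logBertrand K s x) = (logIterProd K x)⁻¹ * log^[K] x ^ (-s) := by
  rw [logBertrand, neg_add, exp_add, ← sum_neg_distrib, exp_sum, logIterProd,
    ← prod_inv_distrib, rpow_def_of_pos (hx K le_rfl), Function.iterate_succ_apply']
  congr 1
  · refine prod_congr rfl fun j hj => ?_
    rw [Function.iterate_succ_apply', exp_neg, exp_log (hx j (mem_range.1 hj).le)]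
  · ring_nf

theorem hasDerivAt_log_iterate_rpow (hs : s ≠ 1) (hx : ∀ i ≤ K, 0 < log^[i] x) :
    HasDerivAt (fun y => log^[K] y ^ (1 - s) / (s - 1)) (-exp (-logBertrand K s x)) x := by
  have hderiv := ((hasDerivAt_log_iterate fun i hi => hx i hi.le).rpow_const
    (p := 1 - s) (Or.inl (hx K le_rfl).ne')).div_const (s - 1)
  refine hderiv.congr_deriv ?_
  rw [exp_neg_logBertrand hx, sub_sub_cancel_left]
  field_simp [sub_ne_zero.2 hs]
  ring

theorem logBertrandDeriv_eq (hK : 1 ≤ K) (c x : ℝ) :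
    logBertrandDeriv K c x =
      1 / x + 1 / x * ∑ k ∈ Icc 1 (K - 1), 1 / ∏ j ∈ Icc 1 k, log^[j] x
        + c / (x * ∏ j ∈ Icc 1 K, log^[j] x) := by
  obtain ⟨K, rfl⟩ := Nat.exists_eq_add_of_le' hK
  rw [logBertrandDeriv, range_eq_Ico, sum_eq_sum_Ico_succ_bot K.succ_pos, Nat.succ_eq_add_one,
    zero_add, Ico_add_one_right_eq_Icc, Nat.add_sub_cancel, mul_sum]
  simp [logIterProd_succ, div_eq_mul_inv, mul_comm]

theorem tendsto_logBertrandDeriv_atTop (hs : 0 ≤ s) :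
    Tendsto (logBertrandDeriv K s) atTop (𝓝 0) := by
  refine squeeze_zero' (g := fun x => (K + s) / x) ?_ ?_ (tendsto_const_nhds.div_atTop tendsto_id)
  · filter_upwards [eventually_one_le_log_iterate K] with x hx
    exact logBertrandDeriv_nonneg hs fun i hi => one_pos.trans_le (hx i hi)
  · filter_upwards [eventually_one_le_log_iterate K] with x hx
    exact logBertrandDeriv_le hs hx

theorem tendsto_sq_logBertrandDeriv_mul_logIterProd_atTop (hs : 0 ≤ s) :
    Tendsto (fun x => logBertrandDeriv K s x ^ 2 * logIterProd (K + 1) x) atTop (𝓝 0) := by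
  have hlim : Tendsto (fun x => (K + s) ^ 2 * (log x ^ K / x)) atTop (𝓝 0) := by
    simpa using (tendsto_pow_log_div_mul_add_atTop 1 0 K one_ne_zero).const_mul ((K + s) ^ 2)
  refine squeeze_zero' ?_ ?_ hlim
  · filter_upwards [eventually_one_le_log_iterate K] with x hx
    exact mul_nonneg (sq_nonneg _)
      (logIterProd_pos fun i hi => one_pos.trans_le (hx i (by omega))).le
  · filter_upwards [eventually_one_le_log_iterate K] with x hx
    have hpos : ∀ i ≤ K, 0 < log^[i] x := fun i hi => one_pos.trans_le (hx i hi)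
    have hx0 : 0 < x := hpos 0 K.zero_le
    calc logBertrandDeriv K s x ^ 2 * logIterProd (K + 1) x
        ≤ ((K + s) / x) ^ 2 * (x * log x ^ K) :=
          mul_le_mul
            (pow_le_pow_left₀ (logBertrandDeriv_nonneg hs hpos) (logBertrandDeriv_le hs hx) 2)
            (logIterProd_succ_le hpos) (logIterProd_pos fun i hi => hpos i (by omega)).le
            (by positivity)
      _ = (K + s) ^ 2 * (log x ^ K / x) := by field_simp

theorem eventually_exp_logBertrand_sub_le {c : ℝ} (hs : 0 ≤ s) (hsc : s < c) :
    ∀ᶠ x in atTop,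
      exp (logBertrand K s (x + 1) - logBertrand K s x) ≤ 1 + logBertrandDeriv K c x := by
  filter_upwards [eventually_one_le_log_iterate K,
    (tendsto_logBertrandDeriv_atTop hs).eventually (eventually_le_nhds one_pos),
    (tendsto_sq_logBertrandDeriv_mul_logIterProd_atTop hs).eventually
      (eventually_le_nhds (sub_pos.2 hsc))] with x hx hderiv_le_one hsq_le
  have hpos : ∀ i ≤ K, 0 < log^[i] x := fun i hi => one_pos.trans_le (hx i hi)
  set t := logBertrandDeriv K s x
  have ht : 0 ≤ t := logBertrandDeriv_nonneg hs hpos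
  have hmvt : logBertrand K s (x + 1) - logBertrand K s x ≤ t := by
    simpa using sub_le_of_hasDerivAt_le (lt_add_one x)
      (fun y hy => hasDerivAt_logBertrand fun i hi =>
        one_pos.trans_le (one_le_log_iterate_of_le hx hy.1 i hi))
      (fun y hy => logBertrandDeriv_le_logBertrandDeriv hs hpos hy.1.le)
  have hexp : exp t ≤ 1 + t + t ^ 2 := by
    have := abs_exp_sub_one_sub_id_le (abs_le.2 ⟨by linarith, hderiv_le_one⟩)
    linarith [le_abs_self (exp t - 1 - t)]
  have hP : 0 < logIterProd (K + 1) x := logIterProd_pos fun i hi => hpos i (by omega)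
  have hsq : t ^ 2 ≤ (c - s) * (logIterProd (K + 1) x)⁻¹ := by
    rwa [← div_eq_mul_inv, le_div_iff₀ hP]
  calc exp (logBertrand K s (x + 1) - logBertrand K s x) ≤ exp t := exp_le_exp.2 hmvt
    _ ≤ 1 + t + (c - s) * (logIterProd (K + 1) x)⁻¹ := by linarith
    _ = 1 + logBertrandDeriv K c x := by simp only [t, logBertrandDeriv]; ring

theorem eventually_exp_neg_logBertrand_le (hs : 1 < s) :
    ∀ᶠ x in atTop, exp (-logBertrand K s (x + 1)) ≤
      log^[K] x ^ (1 - s) / (s - 1) - log^[K] (x + 1) ^ (1 - s) / (s - 1) := by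
  filter_upwards [eventually_one_le_log_iterate K] with x hx
  have hpos : ∀ y ≥ x, ∀ i ≤ K, 0 < log^[i] y := fun y hy i hi =>
    one_pos.trans_le (one_le_log_iterate_of_le hx hy i hi)
  have hmvt := sub_le_of_hasDerivAt_le (lt_add_one x)
    (fun y hy => hasDerivAt_log_iterate_rpow hs.ne' (hpos y hy.1))
    (C := -exp (-logBertrand K s (x + 1))) fun y hy =>
      neg_le_neg <| exp_le_exp.2 <| neg_le_neg <|
        logBertrand_le_logBertrand (by linarith) (hpos y hy.1.le) hy.2.le
  simp only [add_sub_cancel_left, mul_one] at hmvt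
  linarith

theorem summable_exp_neg_logBertrand (hs : 1 < s) :
    Summable fun n : ℕ => exp (-logBertrand K s n) := by
  refine (summable_nat_add_iff 1).mp <| summable_of_le_sub_succ_s15 (fun n => (exp_pos _).le)
    (g := fun n : ℕ => log^[K] (n : ℝ) ^ (1 - s) / (s - 1)) ?_ ?_
  · filter_upwards [tendsto_natCast_atTop_atTop.eventually (eventually_one_le_log_iterate K)]
      with n hn
    exact div_nonneg (rpow_nonneg (zero_le_one.trans (hn K le_rfl)) _) (by linarith)
  · filter_upwards [tendsto_natCast_atTop_atTop.eventually (eventually_exp_neg_logBertrand_le hs)]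
      with n hn
    simpa using hn

end logBertrand

end Real

/-- **Series form of the transience criterion for birth-and-death processes.**
Here `Real.log^[k]` is the `k`-th iterate of `Real.log`. -/
theorem birth_death_transient
    (lam mu : ℕ → ℝ) (hlam : ∀ n, 0 < lam n) (hmu : ∀ n, 0 < mu n)
    (c : ℝ) (hc : 1 < c) (K : ℕ) (hK : 1 ≤ K) (n₀ : ℕ)
    (h : ∀ n > n₀,
      lam n / mu n ≥
        1 + 1 / (n : ℝ)
          + (1 / (n : ℝ)) * ∑ k ∈ Finset.Icc 1 (K - 1),
              1 / ∏ j ∈ Finset.Icc 1 k, Real.log^[j] (n : ℝ)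
          + c / ((n : ℝ) * ∏ j ∈ Finset.Icc 1 K, Real.log^[j] (n : ℝ))) :
    Summable (fun n : ℕ => ∏ k ∈ Finset.Icc 1 n, mu k / lam k) := by
  obtain ⟨s, hs, hsc⟩ := exists_between hc
  have ha : ∀ n, 0 < ∏ k ∈ Icc 1 n, mu k / lam k := fun n =>
    prod_pos fun k _ => div_pos (hmu k) (hlam k)
  refine summable_of_ratio_le_ratio ha (fun n => exp_pos _)
    ((summable_nat_add_iff 1).2 (summable_exp_neg_logBertrand (K := K) hs)) ?_
  have hshift : Tendsto (fun n : ℕ => ((n + 1 : ℕ) : ℝ)) atTop atTop :=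
    tendsto_natCast_atTop_atTop.comp (tendsto_add_atTop_nat 1)
  filter_upwards [eventually_ge_atTop n₀,
    hshift.eventually (eventually_exp_logBertrand_sub_le (K := K) (by linarith) hsc)] with n hn hexp
  have hratio : exp (logBertrand K s ((n + 1 : ℕ) + 1) - logBertrand K s (n + 1 : ℕ)) ≤
      lam (n + 1) / mu (n + 1) := by
    linarith [h (n + 1) (by omega), logBertrandDeriv_eq hK c ((n + 1 : ℕ) : ℝ)]
  rw [prod_Icc_succ_top (by omega), mul_div_cancel_left₀ _ (ha n).ne', ← exp_sub, neg_sub_neg,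
    Nat.cast_succ (n + 1), ← neg_sub, exp_neg, ← inv_div]
  exact inv_anti₀ (exp_pos _) hratio
end
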